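/- Take r = 37/58 (so x = √1995/116, y = 37/116) and let Λ be the subgroup of ℤ² generated by (7, −3) and (4, 3), which has index 33 in ℤ². Then the separation of the induced 33-colouring of the tiles T(i, j) equals 227/58, and this value is attained. -/

import Mathlib

noncomputable section

/-- The Euclidean plane ℝ². -/
abbrev Plane := EuclideanSpace ℝ (Fin 2)

/-- The point (a, b) of the Euclidean plane. -/
def pt (a b : ℝ) : Plane := !₂[a, b]

/-- The semi-regular hexagon K(r): with y = r/2 and x = √(1 − r²)/2, the closed convex
hull of the six points (0, 1/2), (x, y), (x, −y), (0, −1/2), (−x, −y), (−x, y). -/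
def hexK (r : ℝ) : Set Plane :=
  convexHull ℝ
    {pt 0 (1 / 2), pt (Real.sqrt (1 - r ^ 2) / 2) (r / 2),
      pt (Real.sqrt (1 - r ^ 2) / 2) (-(r / 2)), pt 0 (-(1 / 2)),
      pt (-(Real.sqrt (1 - r ^ 2) / 2)) (-(r / 2)),
      pt (-(Real.sqrt (1 - r ^ 2) / 2)) (r / 2)}

/-- The center c(i, j) = ((2i + j)·x, j·(y + 1/2)) of the tile with index (i, j). -/
def center (r : ℝ) (i j : ℤ) : Plane :=
  pt ((2 * (i : ℝ) + (j : ℝ)) * (Real.sqrt (1 - r ^ 2) / 2)) ((j : ℝ) * (r / 2 + 1 / 2))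

/-- The tile T(i, j) = c(i, j) + K(r). -/
def tile (r : ℝ) (i j : ℤ) : Set Plane :=
  (fun p => center r i j + p) '' hexK r

/-- The set of distances realized by points in two distinct same-coloured tiles,
for the colouring of the tiles T(i, j) by the cosets of a subgroup Λ ≤ ℤ²:
tiles T(i, j) and T(i', j') get the same colour iff (i − i', j − j') ∈ Λ.
The separation of the colouring is the infimum of this set. -/
def sameColourDists (r : ℝ) (Λ : AddSubgroup (ℤ × ℤ)) : Set ℝ :=
  {d : ℝ | ∃ (i j i' j' : ℤ) (p q : Plane),
    (i, j) ≠ (i', j') ∧ (i - i', j - j') ∈ Λ ∧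
    p ∈ tile r i j ∧ q ∈ tile r i' j' ∧ d = dist p q}

end

/-!
Write an element of Λ as `m • (7, -3) + n • (4, 3)`. The corresponding offset of tile centres is
`Δ = (11 s x, 285 t / 116)` with `s = m + n` and `t = n - m`, which have equal parity and do not
both vanish. If `|s| ≥ 2` or `|t| ≥ 2`, then `‖Δ‖ ≥ 570/116`, and since the hexagon lies in the
disc of radius `1/2` the tiles are at distance at least `‖Δ‖ - 1 = 227/58`. Otherwise
`|s| = |t| = 1`, and we test against `w = (9√1995 s, 211 t)`, which is `116` times the vector
joining the nearest vertices `(s x, t y)` and `Δ - (s x, t y)` of the two tiles: `‖w‖ = 454`,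
`⟪w, Δ⟫ = 257640/116` and `|⟪w, u⟫| ≤ 25762/116` on the hexagon, so
`454 ‖Δ + u - v‖ ≥ 206116/116 = 454 · 227/58`. Equality holds between the bottom vertex of
`T(0, 0)` and the top vertex of `T(3, -6)`. The index is `33` because Λ is the kernel of
`(a, b) ↦ b - 9a mod 33`.
-/

open Real Metric
open scoped InnerProductSpace

@[simp] lemma pt_apply_zero (a b : ℝ) : pt a b 0 = a := rfl

@[simp] lemma pt_apply_one (a b : ℝ) : pt a b 1 = b := rfl

lemma Plane.ext {p q : Plane} (h₀ : p 0 = q 0) (h₁ : p 1 = q 1) : p = q := by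
  ext i
  fin_cases i <;> assumption

lemma pt_sub_pt (a b c d : ℝ) : pt a b - pt c d = pt (a - c) (b - d) :=
  Plane.ext rfl rfl

lemma pt_add_pt (a b c d : ℝ) : pt a b + pt c d = pt (a + c) (b + d) :=
  Plane.ext rfl rfl

lemma norm_pt (a b : ℝ) : ‖pt a b‖ = √(a ^ 2 + b ^ 2) := by
  simp [EuclideanSpace.norm_eq, Fin.sum_univ_two, sq_abs]

lemma inner_pt (a b : ℝ) (u : Plane) : ⟪pt a b, u⟫_ℝ = a * u 0 + b * u 1 := by
  simp [PiLp.inner_apply, Fin.sum_univ_two, mul_comm]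

lemma norm_sub_le_norm_add_sub {E : Type*} [SeminormedAddCommGroup E] {Δ u v : E} {ρ : ℝ}
    (hu : ‖u‖ ≤ ρ) (hv : ‖v‖ ≤ ρ) : ‖Δ‖ - 2 * ρ ≤ ‖Δ + u - v‖ := by
  have := norm_sub_le (Δ + u - v) (u - v)
  have := norm_sub_le u v
  rw [show Δ + u - v - (u - v) = Δ by abel] at *
  linarith

lemma inner_sub_le_norm_mul_norm_add_sub {E : Type*} [NormedAddCommGroup E]
    [InnerProductSpace ℝ E] {w Δ u v : E} {h : ℝ} (hu : |⟪w, u⟫_ℝ| ≤ h) (hv : |⟪w, v⟫_ℝ| ≤ h) :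
    ⟪w, Δ⟫_ℝ - 2 * h ≤ ‖w‖ * ‖Δ + u - v‖ := by
  have := real_inner_le_norm w (Δ + u - v)
  rw [inner_sub_right, inner_add_right] at this
  linarith [abs_le.mp hu, abs_le.mp hv]

lemma hexK_subset_closedBall {r : ℝ} (hr : r ^ 2 ≤ 1) : hexK r ⊆ closedBall 0 (1 / 2) := by
  have hx : (√(1 - r ^ 2) / 2) ^ 2 = (1 - r ^ 2) / 4 := by
    rw [div_pow, sq_sqrt (by linarith)]; norm_num
  refine convexHull_min ?_ (convex_closedBall _ _)
  rintro z (rfl | rfl | rfl | rfl | rfl | rfl) <;>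
  · rw [mem_closedBall, dist_zero_right, norm_pt, sqrt_le_left (by norm_num)]
    nlinarith

lemma abs_inner_le_of_mem_hexK {r a b h : ℝ} (h₁ : |b| / 2 ≤ h)
    (h₂ : |a * (√(1 - r ^ 2) / 2) + b * (r / 2)| ≤ h)
    (h₃ : |a * (√(1 - r ^ 2) / 2) - b * (r / 2)| ≤ h) {u : Plane} (hu : u ∈ hexK r) :
    |⟪pt a b, u⟫_ℝ| ≤ h := by
  have hconv : Convex ℝ {u : Plane | |⟪pt a b, u⟫_ℝ| ≤ h} := by
    simpa [Set.preimage, ← abs_le] using (convex_Icc (-h) h).linear_preimage (innerₛₗ ℝ (pt a b))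
  refine convexHull_min ?_ hconv hu
  rintro z (rfl | rfl | rfl | rfl | rfl | rfl) <;>
  · simp only [Set.mem_ofPred_eq, inner_pt, pt_apply_zero, pt_apply_one]
    rw [abs_le]
    constructor <;> linarith [abs_le.mp h₂, abs_le.mp h₃, le_abs_self b, neg_abs_le b]

lemma center_sub_center (r : ℝ) (i j i' j' : ℤ) :
    center r i j - center r i' j' = center r (i - i') (j - j') := by
  simp only [center, pt_sub_pt]
  push_cast
  ring_nf

lemma exists_dist_eq_of_mem_tile {r : ℝ} {i j i' j' : ℤ} {p q : Plane}
    (hp : p ∈ tile r i j) (hq : q ∈ tile r i' j') :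
    ∃ u ∈ hexK r, ∃ v ∈ hexK r, dist p q = ‖center r (i - i') (j - j') + u - v‖ := by
  obtain ⟨u, hu, rfl⟩ := hp
  obtain ⟨v, hv, rfl⟩ := hq
  refine ⟨u, hu, v, hv, ?_⟩
  rw [dist_eq_norm, ← center_sub_center, add_sub_add_comm, add_sub_assoc]

lemma sqrt_one_sub_sq_37_58 : √(1 - (37 / 58 : ℝ) ^ 2) / 2 = √1995 / 116 := by
  rw [show (1 - (37 / 58 : ℝ) ^ 2) = 1995 / 58 ^ 2 by norm_num, sqrt_div' _ (by norm_num),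
    sqrt_sq (by norm_num)]
  ring

lemma center_comb_generators (m n : ℤ) :
    center (37 / 58) (m * 7 + n * 4) (m * (-3) + n * 3) =
      pt (11 * (m + n : ℤ) * (√1995 / 116)) (285 * (n - m : ℤ) / 116) := by
  rw [center, sqrt_one_sub_sq_37_58]
  push_cast
  ring_nf

lemma le_norm_add_sub_of_far {s t : ℝ} (hst : 2 ≤ |s| ∨ 2 ≤ |t|) {u v : Plane}
    (hu : u ∈ hexK (37 / 58)) (hv : v ∈ hexK (37 / 58)) :
    227 / 58 ≤ ‖pt (11 * s * (√1995 / 116)) (285 * t / 116) + u - v‖ := by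
  have hball := hexK_subset_closedBall (r := 37 / 58) (by norm_num)
  have hΔ : 570 / 116 ≤ ‖pt (11 * s * (√1995 / 116)) (285 * t / 116)‖ := by
    rw [norm_pt, le_sqrt (by norm_num) (by positivity)]
    have := sq_sqrt (show (0 : ℝ) ≤ 1995 by norm_num)
    rcases hst with h | h <;> nlinarith [sq_abs s, sq_abs t, sq_nonneg s, sq_nonneg t]
  have := norm_sub_le_norm_add_sub (Δ := pt (11 * s * (√1995 / 116)) (285 * t / 116))
    (mem_closedBall_zero_iff.mp (hball hu)) (mem_closedBall_zero_iff.mp (hball hv))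
  linarith

lemma abs_inner_le_of_mem_hexK_of_abs_eq_one {s t : ℝ} (hs : |s| = 1) (ht : |t| = 1) {u : Plane}
    (hu : u ∈ hexK (37 / 58)) : |⟪pt (9 * √1995 * s) (211 * t), u⟫_ℝ| ≤ 25762 / 116 := by
  have h1995 := mul_self_sqrt (show (0 : ℝ) ≤ 1995 by norm_num)
  have hA : |9 * √1995 * s * (√1995 / 116)| = 9 * 1995 / 116 := by
    rw [show 9 * √1995 * s * (√1995 / 116) = s * (9 * 1995 / 116) by
      linear_combination (9 / 116 * s) * h1995, abs_mul, hs, one_mul]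
    norm_num
  have hB : |211 * t * (37 / 58 / 2)| = 211 * 37 / 116 := by
    rw [mul_right_comm, abs_mul, ht]
    norm_num
  refine abs_inner_le_of_mem_hexK ?_ ?_ ?_ hu
  · rw [abs_mul, ht]
    norm_num
  · rw [sqrt_one_sub_sq_37_58]
    refine (abs_add_le _ _).trans ?_
    rw [hA, hB]
    norm_num
  · rw [sqrt_one_sub_sq_37_58]
    refine (abs_sub _ _).trans ?_
    rw [hA, hB]
    norm_num

lemma le_norm_add_sub_of_near {s t : ℝ} (hs : |s| = 1) (ht : |t| = 1) {u v : Plane}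
    (hu : u ∈ hexK (37 / 58)) (hv : v ∈ hexK (37 / 58)) :
    227 / 58 ≤ ‖pt (11 * s * (√1995 / 116)) (285 * t / 116) + u - v‖ := by
  have h1995 := sq_sqrt (show (0 : ℝ) ≤ 1995 by norm_num)
  have hs2 : s ^ 2 = 1 := by rw [← sq_abs, hs, one_pow]
  have ht2 : t ^ 2 = 1 := by rw [← sq_abs, ht, one_pow]
  have hw : ‖pt (9 * √1995 * s) (211 * t)‖ = 454 := by
    rw [norm_pt, show (9 * √1995 * s) ^ 2 + (211 * t) ^ 2 = 454 ^ 2 by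
      rw [mul_pow, mul_pow, mul_pow, h1995, hs2, ht2]; norm_num]
    exact sqrt_sq (by norm_num)
  have hwΔ : ⟪pt (9 * √1995 * s) (211 * t), pt (11 * s * (√1995 / 116)) (285 * t / 116)⟫_ℝ =
      257640 / 116 := by
    rw [inner_pt, pt_apply_zero, pt_apply_one]
    linear_combination
      (99 / 116 * s ^ 2) * h1995 + (99 * 1995 / 116) * hs2 + (211 * 285 / 116) * ht2
  have := inner_sub_le_norm_mul_norm_add_sub (Δ := pt (11 * s * (√1995 / 116)) (285 * t / 116))
    (abs_inner_le_of_mem_hexK_of_abs_eq_one hs ht hu)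
    (abs_inner_le_of_mem_hexK_of_abs_eq_one hs ht hv)
  rw [hw, hwΔ] at this
  linarith

local notation "Λ" => AddSubgroup.closure {((7 : ℤ), (-3 : ℤ)), ((4 : ℤ), (3 : ℤ))}

def colour : ℤ × ℤ →+ ZMod 33 :=
  AddMonoidHom.mk' (fun p => (p.2 : ZMod 33) - 9 * p.1) fun p q => by
    simp only [Prod.fst_add, Prod.snd_add]
    push_cast
    ring

lemma closure_eq_ker_colour : Λ = colour.ker := by
  refine le_antisymm ((AddSubgroup.closure_le _).mpr ?_) fun p hp => ?_
  · rintro p (rfl | rfl) <;> exact colour.mem_ker.mpr (by decide)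
  · have h33 : ((33 : ℕ) : ℤ) ∣ p.2 - 9 * p.1 :=
      (ZMod.intCast_zmod_eq_zero_iff_dvd _ 33).mp (by push_cast; exact hp)
    obtain ⟨k, hk⟩ := h33
    refine AddSubgroup.mem_closure_pair.mpr ⟨-p.1 - 4 * k, 2 * p.1 + 7 * k, ?_⟩
    push_cast at hk
    ext <;> simp only [Prod.fst_add, Prod.snd_add, Prod.smul_fst, Prod.smul_snd, smul_eq_mul] <;>
      linarith

lemma index_closure : AddSubgroup.index Λ = 33 := by
  have hsurj : Function.Surjective colour := fun z => by
    obtain ⟨b, rfl⟩ := ZMod.intCast_surjective z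
    exact ⟨(0, b), by simp [colour]⟩
  rw [closure_eq_ker_colour, AddSubgroup.index_ker,
    AddMonoidHom.range_eq_top_of_surjective _ hsurj, AddSubgroup.card_top, Nat.card_zmod]

lemma le_of_mem_sameColourDists {d : ℝ} (hd : d ∈ sameColourDists (37 / 58) Λ) :
    227 / 58 ≤ d := by
  obtain ⟨i, j, i', j', p, q, hne, hΛ, hp, hq, rfl⟩ := hd
  obtain ⟨u, hu, v, hv, hpq⟩ := exists_dist_eq_of_mem_tile hp hq
  obtain ⟨m, n, hmn⟩ := AddSubgroup.mem_closure_pair.mp hΛ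
  obtain ⟨hi, hj⟩ := Prod.ext_iff.mp hmn.symm
  simp only [Prod.fst_add, Prod.snd_add, Prod.smul_fst, Prod.smul_snd, smul_eq_mul] at hi hj
  simp only [ne_eq, Prod.mk.injEq] at hne
  rw [hpq, hi, hj, center_comb_generators]
  -- `m + n` and `n - m` have the same parity and do not both vanish
  have hcases : (2 ≤ |m + n| ∨ 2 ≤ |n - m|) ∨ (|m + n| = 1 ∧ |n - m| = 1) := by
    simp only [abs_eq_max_neg]
    omega
  rcases hcases with hfar | ⟨hs, ht⟩
  · exact le_norm_add_sub_of_far (by exact_mod_cast hfar) hu hv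
  · exact le_norm_add_sub_of_near (by exact_mod_cast hs) (by exact_mod_cast ht) hu hv

lemma mem_sameColourDists : 227 / 58 ∈ sameColourDists (37 / 58) Λ := by
  refine ⟨0, 0, 3, -6, center (37 / 58) 0 0 + pt 0 (-(1 / 2)),
    center (37 / 58) 3 (-6) + pt 0 (1 / 2), by decide,
    AddSubgroup.mem_closure_pair.mpr ⟨-1, 1, by decide⟩,
    ⟨_, subset_convexHull ℝ _ (by simp), rfl⟩, ⟨_, subset_convexHull ℝ _ (by simp), rfl⟩, ?_⟩
  rw [dist_eq_norm, add_sub_add_comm, center_sub_center, center, pt_sub_pt, pt_add_pt, norm_pt]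
  norm_num

/-- with r = 37/58 and Λ = ⟨(7, -3), (4, 3)⟩ ≤ ℤ² of index 33,
the separation of the induced 33-colouring of the tiles T(i, j) equals the stated
value, and this value is attained. -/
theorem statement14 :
    (AddSubgroup.closure {(((7) : ℤ), ((-3) : ℤ)), (((4) : ℤ), ((3) : ℤ))}).index = 33 ∧
    IsLeast
      (sameColourDists (37 / 58)
        (AddSubgroup.closure {(((7) : ℤ), ((-3) : ℤ)), (((4) : ℤ), ((3) : ℤ))}))
      ((227 : ℝ) / 58) :=
  ⟨index_closure, mem_sameColourDists, fun _ => le_of_mem_sameColourDists⟩
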